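/- Suppose G(V,E) satisfies the sufficient condition for parameter f, and let F be the set of Byzantine faulty nodes with |F| ≤ f. Then in every execution of the Middle algorithm, lim_{t→∞} (U[t] − μ[t]) = 0 (convergence). -/

import Mathlib

open Finset Filter

variable {V : Type} [Fintype V] [DecidableEq V]

/-- Incoming neighbors of node `v` in the directed graph with edge set `E`. -/
def NinSet (E : Finset (V × V)) (v : V) : Finset V :=
  Finset.univ.filter (fun u => (u, v) ∈ E)

/-- `A ⇒ B`: there is a node in `B` with more than 1/3 of its incoming neighbors in `A`. -/
def ImpRel (E : Finset (V × V)) (A B : Finset V) : Prop :=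
  ∃ v ∈ B, (NinSet E v).card < 3 * ((NinSet E v) ∩ A).card

/-- `in(A ⇒ B)`: the set of nodes in `B` with more than 1/3 of incoming neighbors in `A`. -/
def inRel (E : Finset (V × V)) (A B : Finset V) : Finset V :=
  B.filter (fun v => (NinSet E v).card < 3 * ((NinSet E v) ∩ A).card)

/-- `A` propagates to `B` in `l` steps. -/
def PropagatesIn (E : Finset (V × V)) (A B : Finset V) (l : ℕ) : Prop :=
  0 < l ∧ ∃ As Bs : ℕ → Finset V,
    As 0 = A ∧ Bs 0 = B ∧ As l = A ∪ B ∧ Bs l = ∅ ∧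
    (∀ τ < l, Bs τ ≠ ∅) ∧
    (∀ τ < l, ImpRel E (As τ) (Bs τ) ∧
      As (τ + 1) = As τ ∪ inRel E (As τ) (Bs τ) ∧
      Bs (τ + 1) = Bs τ \ inRel E (As τ) (Bs τ))

/-- `A` propagates to `B` (in some number of steps). -/
def Propagates (E : Finset (V × V)) (A B : Finset V) : Prop :=
  ∃ l, PropagatesIn E A B l

/-- The sufficient condition for parameter `f`. -/
def SuffCond (E : Finset (V × V)) (f : ℕ) : Prop :=
  (∀ v : V, 3 * f ≤ (NinSet E v).card) ∧
  (∀ F L C R : Finset V,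
    F ∪ L ∪ C ∪ R = Finset.univ →
    Disjoint F L → Disjoint F C → Disjoint F R →
    Disjoint L C → Disjoint L R → Disjoint C R →
    L.Nonempty → R.Nonempty → F.card ≤ f →
    ImpRel E (C ∪ R) L ∨ ImpRel E (L ∪ C) R)

/-- The weight `a_i = 1/(|N_i^-| - 2⌊|N_i^-|/3⌋ + 1)` used in the Middle algorithm. -/
noncomputable def middleWeight (E : Finset (V × V)) (i : V) : ℝ :=
  (((NinSet E i).card - 2 * ((NinSet E i).card / 3) + 1 : ℕ) : ℝ)⁻¹

/-- `α = min_{i ∈ V} a_i`. -/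
noncomputable def alphaMin (E : Finset (V × V)) : ℝ :=
  ⨅ i : V, middleWeight E i

/-- An execution of the Middle algorithm on graph `E` with faulty set `F`. -/
structure MiddleExec (E : Finset (V × V)) (F : Finset V) where
  /-- `state i t` is the state `v_i[t]` (meaningful for fault-free `i`). -/
  state : V → ℕ → ℝ
  /-- `w t i j` is the value node `i` receives from `j ∈ N_i^-` in iteration `t ≥ 1`. -/
  w : ℕ → V → V → ℝ
  /-- the set `B` at node `i` in iteration `t`. -/
  Bs : ℕ → V → Finset V
  /-- the set `T` at node `i` in iteration `t`. -/
  Ts : ℕ → V → Finset V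
  /-- the set `M` at node `i` in iteration `t`. -/
  Ms : ℕ → V → Finset V
  w_honest : ∀ t, 1 ≤ t → ∀ i, i ∉ F → ∀ j ∈ NinSet E i, j ∉ F →
    w t i j = state j (t - 1)
  part_union : ∀ t, 1 ≤ t → ∀ i, i ∉ F → Bs t i ∪ Ts t i ∪ Ms t i = NinSet E i
  disj_BT : ∀ t, 1 ≤ t → ∀ i, i ∉ F → Disjoint (Bs t i) (Ts t i)
  disj_BM : ∀ t, 1 ≤ t → ∀ i, i ∉ F → Disjoint (Bs t i) (Ms t i)
  disj_TM : ∀ t, 1 ≤ t → ∀ i, i ∉ F → Disjoint (Ts t i) (Ms t i)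
  card_B : ∀ t, 1 ≤ t → ∀ i, i ∉ F → (Bs t i).card = (NinSet E i).card / 3
  card_T : ∀ t, 1 ≤ t → ∀ i, i ∉ F → (Ts t i).card = (NinSet E i).card / 3
  le_BM : ∀ t, 1 ≤ t → ∀ i, i ∉ F → ∀ j ∈ Bs t i, ∀ k ∈ Ms t i, w t i j ≤ w t i k
  le_MT : ∀ t, 1 ≤ t → ∀ i, i ∉ F → ∀ j ∈ Ms t i, ∀ k ∈ Ts t i, w t i j ≤ w t i k
  update : ∀ t, 1 ≤ t → ∀ i, i ∉ F →
    state i t = middleWeight E i * (state i (t - 1) + ∑ j ∈ Ms t i, w t i j)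

/-- `U[t]`: the maximum state among fault-free nodes at the end of iteration `t`. -/
noncomputable def Umax {E : Finset (V × V)} {F : Finset V}
    (exec : MiddleExec E F) (t : ℕ) : ℝ :=
  ⨆ i : {i : V // i ∉ F}, exec.state i.1 t

/-- `μ[t]`: the minimum state among fault-free nodes at the end of iteration `t`. -/
noncomputable def muMin {E : Finset (V × V)} {F : Finset V}
    (exec : MiddleExec E F) (t : ℕ) : ℝ :=
  ⨅ i : {i : V // i ∉ F}, exec.state i.1 t

/-! Between two rounds the fault-free range `[μ, U]` can only shrink: a node with `d ≥ 3f`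
in-neighbours discards `⌊d/3⌋ ≥ f` values on each side, so every value it keeps lies in the range.
To see it shrink by a fixed factor, fix `t`, put `Δ = U[t] - μ[t]`, `α = min aᵢ`, and follow at
time `t + τ` the fault-free nodes above `μ[t] + α^τ Δ/2` and those below `U[t] - α^τ Δ/2`. The two
sets cover all fault-free nodes, and a node enters (or stays in) one of them as soon as it, or
more than a third of its in-neighbours, lie in it, because its new state is an average in which
that value has weight at least `α`. By the sufficient condition one set gains a node in every
round until one of them holds every fault-free node, which happens within `|V|` rounds; the range
has then lost at least `α^|V| Δ/2`. -/

lemma add_mul_le_mul_add_sum {ι : Type*} {s : Finset ι} {g : ι → ℝ} {a m c x : ℝ}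
    (ha : a * (#s + 1) = 1) (ha0 : 0 ≤ a) (hx : m ≤ x) (hg : ∀ j ∈ s, m ≤ g j)
    (h : m + c ≤ x ∨ ∃ k ∈ s, m + c ≤ g k) :
    m + a * c ≤ a * (x + ∑ j ∈ s, g j) := by
  have hsum : (#s + 1) * m + c ≤ x + ∑ j ∈ s, g j := by
    rcases h with hxc | ⟨k, hk, hgk⟩
    · have := card_nsmul_le_sum s g m hg
      rw [nsmul_eq_mul] at this
      linarith
    · have := single_le_sum (f := fun j => g j - m) (fun j hj => sub_nonneg.2 (hg j hj)) hk
      rw [sum_sub_distrib, sum_const, nsmul_eq_mul] at this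
      linarith
  calc m + a * c = a * ((#s + 1) * m + c) := by linear_combination (-m) * ha
    _ ≤ a * (x + ∑ j ∈ s, g j) := mul_le_mul_of_nonneg_left hsum ha0

lemma tendsto_zero_of_antitone_of_le_mul {g : ℕ → ℝ} (hg : Antitone g) (h0 : ∀ t, 0 ≤ g t)
    {l : ℕ} {q : ℝ} (hq : q < 1) (h : ∀ t, g (t + l) ≤ q * g t) : Tendsto g atTop (nhds 0) := by
  have hlim := tendsto_atTop_ciInf hg ⟨0, Set.forall_mem_range.2 h0⟩
  have hL0 : 0 ≤ ⨅ t, g t := le_ciInf h0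
  have hL : ⨅ t, g t ≤ q * ⨅ t, g t :=
    le_of_tendsto_of_tendsto' (hlim.comp (tendsto_add_atTop_nat l)) (hlim.const_mul q) h
  rwa [le_antisymm (by nlinarith) hL0] at hlim

section Weights

variable (E : Finset (V × V))

lemma middleWeight_pos (i : V) : 0 < middleWeight E i := by
  unfold middleWeight
  positivity

lemma alphaMin_le (i : V) : alphaMin E ≤ middleWeight E i :=
  ciInf_le (Set.finite_range _).bddBelow i

lemma alphaMin_pos [Nonempty V] : 0 < alphaMin E := by
  obtain ⟨i, hi⟩ := exists_eq_ciInf_of_finite (f := middleWeight E)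
  rw [alphaMin, ← hi]
  exact middleWeight_pos E i

lemma alphaMin_le_one [Nonempty V] : alphaMin E ≤ 1 := by
  obtain ⟨i⟩ := ‹Nonempty V›
  refine (alphaMin_le E i).trans (inv_le_one_of_one_le₀ ?_)
  exact_mod_cast Nat.le_add_left 1 _

end Weights

section Propagation

variable {E : Finset (V × V)} {f : ℕ} {F : Finset V}

lemma SuffCond.impRel_or_impRel (hsuff : SuffCond E f) (hF : #F ≤ f) {A B : Finset V}
    (hcover : A ∪ B = Fᶜ) (hA : A ≠ Fᶜ) (hB : B ≠ Fᶜ) :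
    ImpRel E A (Fᶜ \ A) ∨ ImpRel E B (Fᶜ \ B) := by
  have hmem : ∀ v, v ∈ A ∨ v ∈ B ↔ v ∉ F := fun v => by
    rw [← mem_union, hcover, mem_compl]
  have hL : (Fᶜ \ A).Nonempty :=
    sdiff_nonempty.2 fun h => hA (subset_antisymm (hcover ▸ subset_union_left) h)
  have hR : (Fᶜ \ B).Nonempty :=
    sdiff_nonempty.2 fun h => hB (subset_antisymm (hcover ▸ subset_union_right) h)
  have hCR : A ∩ B ∪ (Fᶜ \ B) = A := by
    ext v; have := hmem v; simp only [mem_union, mem_inter, Finset.mem_sdiff, mem_compl]; tauto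
  have hLC : (Fᶜ \ A) ∪ A ∩ B = B := by
    ext v; have := hmem v; simp only [mem_union, mem_inter, Finset.mem_sdiff, mem_compl]; tauto
  have h := hsuff.2 F (Fᶜ \ A) (A ∩ B) (Fᶜ \ B) ?_ ?_ ?_ ?_ ?_ ?_ ?_ hL hR hF
  · rwa [hCR, hLC] at h
  · ext v; have := hmem v
    simp only [mem_union, mem_inter, Finset.mem_sdiff, mem_compl, mem_univ]; tauto
  all_goals
    rw [disjoint_left]; intro v; have := hmem v
    simp only [mem_inter, Finset.mem_sdiff, mem_compl]; tauto

lemma card_lt_card_of_impRel {A A' : Finset V} (hA : A ⊆ Fᶜ)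
    (hstep : ∀ v ∉ F, v ∈ A ∨ #(NinSet E v) < 3 * #(NinSet E v ∩ A) → v ∈ A')
    (himp : ImpRel E A (Fᶜ \ A)) : #A < #A' := by
  obtain ⟨v, hv, hcard⟩ := himp
  rw [Finset.mem_sdiff, mem_compl] at hv
  have hsub : A ⊆ A' := fun u hu => hstep u (mem_compl.1 (hA hu)) (.inl hu)
  exact card_lt_card ((ssubset_iff_of_subset hsub).2 ⟨v, hstep v hv.1 (.inr hcard), hv.2⟩)

lemma SuffCond.eq_compl_or_eq_compl (hsuff : SuffCond E f) (hF : #F ≤ f)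
    {A B : ℕ → Finset V} (hcover : ∀ τ, A τ ∪ B τ = Fᶜ)
    (hA : ∀ τ, ∀ v ∉ F, v ∈ A τ ∨ #(NinSet E v) < 3 * #(NinSet E v ∩ A τ) →
      v ∈ A (τ + 1))
    (hB : ∀ τ, ∀ v ∉ F, v ∈ B τ ∨ #(NinSet E v) < 3 * #(NinSet E v ∩ B τ) →
      v ∈ B (τ + 1)) :
    A (Fintype.card V) = Fᶜ ∨ B (Fintype.card V) = Fᶜ := by
  have hAF τ : A τ ⊆ Fᶜ := hcover τ ▸ subset_union_left
  have hBF τ : B τ ⊆ Fᶜ := hcover τ ▸ subset_union_right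
  have hAmono τ : A τ ⊆ A (τ + 1) := fun v hv => hA τ v (mem_compl.1 (hAF τ hv)) (.inl hv)
  have hBmono τ : B τ ⊆ B (τ + 1) := fun v hv => hB τ v (mem_compl.1 (hBF τ hv)) (.inl hv)
  have key : ∀ τ, A τ = Fᶜ ∨ B τ = Fᶜ ∨ τ + #Fᶜ ≤ #(A τ) + #(B τ) := by
    intro τ
    induction τ with
    | zero => exact .inr (.inr (by rw [← hcover 0, zero_add]; exact card_union_le _ _))
    | succ τ ih =>
      by_cases hAτ : A τ = Fᶜ
      · exact .inl (subset_antisymm (hAF _) (hAτ ▸ hAmono τ))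
      by_cases hBτ : B τ = Fᶜ
      · exact .inr (.inl (subset_antisymm (hBF _) (hBτ ▸ hBmono τ)))
      have ih := (ih.resolve_left hAτ).resolve_left hBτ
      have hA' := card_le_card (hAmono τ)
      have hB' := card_le_card (hBmono τ)
      refine .inr (.inr ?_)
      rcases hsuff.impRel_or_impRel hF (hcover τ) hAτ hBτ with h | h
      · have := card_lt_card_of_impRel (hAF τ) (hA τ) h
        omega
      · have := card_lt_card_of_impRel (hBF τ) (hB τ) h
        omega
  by_contra! hne
  rcases key (Fintype.card V) with h | h | h
  · exact hne.1 h
  · exact hne.2 h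
  · have hA' := card_lt_card ((hAF _).ssubset_of_ne hne.1)
    have hB' := card_lt_card ((hBF _).ssubset_of_ne hne.2)
    have := card_le_univ Fᶜ
    omega

end Propagation

namespace MiddleExec

variable {E : Finset (V × V)} {F : Finset V} (exec : MiddleExec E F)

/-- Mirroring an execution exchanges `U` and `-μ`, so bounds from below give bounds from above. -/
def neg : MiddleExec E F where
  state i t := -exec.state i t
  w t i j := -exec.w t i j
  Bs := exec.Ts
  Ts := exec.Bs
  Ms := exec.Ms
  w_honest t ht i hi j hj hjF := by rw [exec.w_honest t ht i hi j hj hjF]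
  part_union t ht i hi := by rw [union_comm (exec.Ts t i), exec.part_union t ht i hi]
  disj_BT t ht i hi := (exec.disj_BT t ht i hi).symm
  disj_BM := exec.disj_TM
  disj_TM := exec.disj_BM
  card_B := exec.card_T
  card_T := exec.card_B
  le_BM t ht i hi j hj k hk := neg_le_neg (exec.le_MT t ht i hi k hk j hj)
  le_MT t ht i hi j hj k hk := neg_le_neg (exec.le_BM t ht i hi k hk j hj)
  update t ht i hi := by rw [exec.update t ht i hi, sum_neg_distrib]; ring

lemma neg_state (s : ℕ) (i : V) : exec.neg.state i s = -exec.state i s := rfl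

lemma state_le_Umax (t : ℕ) {i : V} (hi : i ∉ F) : exec.state i t ≤ Umax exec t :=
  le_ciSup (f := fun i : {i : V // i ∉ F} => exec.state i.1 t) (Set.finite_range _).bddAbove
    ⟨i, hi⟩

lemma muMin_le_state (t : ℕ) {i : V} (hi : i ∉ F) : muMin exec t ≤ exec.state i t :=
  ciInf_le (f := fun i : {i : V // i ∉ F} => exec.state i.1 t) (Set.finite_range _).bddBelow
    ⟨i, hi⟩

lemma muMin_neg (t : ℕ) : muMin exec.neg t = -Umax exec t := by
  rw [muMin, Umax, iInf, iSup, ← Real.sInf_neg]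
  congr 1
  ext x
  simp [neg, neg_eq_iff_eq_neg]

lemma le_muMin_of_forall_le [Nonempty {i : V // i ∉ F}] {t : ℕ} {x : ℝ}
    (h : ∀ i ∉ F, x ≤ exec.state i t) : x ≤ muMin exec t :=
  le_ciInf fun i => h i.1 i.2

variable {exec} {t : ℕ} {i : V}

lemma state_succ (hi : i ∉ F) :
    exec.state i (t + 1) =
      middleWeight E i * (exec.state i t + ∑ j ∈ exec.Ms (t + 1) i, exec.w (t + 1) i j) := by
  simpa using exec.update (t + 1) (Nat.le_add_left 1 t) i hi

lemma w_succ (hi : i ∉ F) {j : V} (hj : j ∈ NinSet E i) (hjF : j ∉ F) :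
    exec.w (t + 1) i j = exec.state j t := by
  simpa using exec.w_honest (t + 1) (Nat.le_add_left 1 t) i hi j hj hjF

lemma mem_Bs_or_Ts_or_Ms (hi : i ∉ F) {j : V} (hj : j ∈ NinSet E i) :
    j ∈ exec.Bs (t + 1) i ∨ j ∈ exec.Ts (t + 1) i ∨ j ∈ exec.Ms (t + 1) i := by
  rw [← exec.part_union (t + 1) (Nat.le_add_left 1 t) i hi] at hj
  simpa [or_assoc] using hj

lemma Bs_subset (hi : i ∉ F) : exec.Bs (t + 1) i ⊆ NinSet E i := by
  rw [← exec.part_union (t + 1) (Nat.le_add_left 1 t) i hi, union_assoc]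
  exact subset_union_left

lemma Ms_subset (hi : i ∉ F) : exec.Ms (t + 1) i ⊆ NinSet E i := by
  rw [← exec.part_union (t + 1) (Nat.le_add_left 1 t) i hi]
  exact subset_union_right

lemma card_Ms (hi : i ∉ F) :
    #(exec.Ms (t + 1) i) = #(NinSet E i) - 2 * (#(NinSet E i) / 3) := by
  have ht := Nat.le_add_left 1 t
  have hBT := card_union_of_disjoint (exec.disj_BT (t + 1) ht i hi)
  have hBTM := card_union_of_disjoint
    (disjoint_union_left.2 ⟨exec.disj_BM (t + 1) ht i hi, exec.disj_TM (t + 1) ht i hi⟩)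
  rw [exec.part_union (t + 1) ht i hi, hBT, exec.card_B (t + 1) ht i hi,
    exec.card_T (t + 1) ht i hi] at hBTM
  omega

lemma middleWeight_mul_card_Ms (hi : i ∉ F) :
    middleWeight E i * (#(exec.Ms (t + 1) i) + 1) = 1 := by
  rw [card_Ms hi, middleWeight, Nat.cast_add, Nat.cast_one]
  exact inv_mul_cancel₀ (by positivity)

variable {f : ℕ}

lemma muMin_le_w (hd : ∀ v, 3 * f ≤ #(NinSet E v)) (hF : #F ≤ f) (hi : i ∉ F) {j : V}
    (hj : j ∈ exec.Ms (t + 1) i) : muMin exec t ≤ exec.w (t + 1) i j := by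
  have ht := Nat.le_add_left 1 t
  have hjB : j ∉ exec.Bs (t + 1) i := disjoint_right.1 (exec.disj_BM _ ht i hi) hj
  -- `#F ≤ ⌊d/3⌋ = #B`, so `insert j B` has a fault-free member
  obtain ⟨q, hq, hqF⟩ : ∃ q ∈ insert j (exec.Bs (t + 1) i), q ∉ F := by
    by_contra! h
    have := card_le_card fun q hq => h q hq
    rw [card_insert_of_notMem hjB, exec.card_B _ ht i hi] at this
    have := hd i
    omega
  have hqN : q ∈ NinSet E i := insert_subset (Ms_subset hi hj) (Bs_subset hi) hq
  calc muMin exec t ≤ exec.state q t := exec.muMin_le_state t hqF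
    _ = exec.w (t + 1) i q := (w_succ hi hqN hqF).symm
    _ ≤ exec.w (t + 1) i j := by
      rcases mem_insert.1 hq with rfl | hqB
      · rfl
      · exact exec.le_BM _ ht i hi q hqB j hj

lemma exists_mem_Ms_le_w (hi : i ∉ F) {A : Finset V} (hA : A ⊆ Fᶜ)
    (hcard : #(NinSet E i) < 3 * #(NinSet E i ∩ A)) {x : ℝ}
    (hx : ∀ a ∈ A, x ≤ exec.state a t) : ∃ j ∈ exec.Ms (t + 1) i, x ≤ exec.w (t + 1) i j := by
  have ht := Nat.le_add_left 1 t
  obtain ⟨a, ha, haT⟩ : ∃ a ∈ NinSet E i ∩ A, a ∉ exec.Ts (t + 1) i := by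
    by_contra! h
    have := card_le_card fun a ha => h a ha
    rw [exec.card_T _ ht i hi] at this
    omega
  rw [mem_inter] at ha
  have hxa : x ≤ exec.w (t + 1) i a := (w_succ hi ha.1 (mem_compl.1 (hA ha.2))) ▸ hx a ha.2
  rcases mem_Bs_or_Ts_or_Ms hi ha.1 with haB | haT' | haM
  · obtain ⟨j, hj⟩ : (exec.Ms (t + 1) i).Nonempty := by
      rw [← card_pos, card_Ms hi]
      have := card_pos.2 ⟨a, ha.1⟩
      omega
    exact ⟨j, hj, hxa.trans (exec.le_BM _ ht i hi a haB j hj)⟩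
  · exact absurd haT' haT
  · exact ⟨a, haM, hxa⟩

variable (exec) in
noncomputable def superlevel (s : ℕ) (x : ℝ) : Finset V :=
  Fᶜ.filter fun i => x ≤ exec.state i s

lemma mem_superlevel {s : ℕ} {x : ℝ} : i ∈ exec.superlevel s x ↔ i ∉ F ∧ x ≤ exec.state i s := by
  rw [superlevel, mem_filter, mem_compl]

lemma mem_superlevel_succ (hd : ∀ v, 3 * f ≤ #(NinSet E v)) (hF : #F ≤ f) {m c : ℝ}
    (hm : m ≤ muMin exec t) (hc : 0 ≤ c) (hi : i ∉ F)
    (h : i ∈ exec.superlevel t (m + c) ∨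
      #(NinSet E i) < 3 * #(NinSet E i ∩ exec.superlevel t (m + c))) :
    i ∈ exec.superlevel (t + 1) (m + alphaMin E * c) := by
  have hm' : m ≤ exec.state i t := hm.trans (exec.muMin_le_state t hi)
  have h' : m + c ≤ exec.state i t ∨ ∃ k ∈ exec.Ms (t + 1) i, m + c ≤ exec.w (t + 1) i k := by
    rcases h with h | h
    · exact .inl (mem_superlevel.1 h).2
    · exact .inr (exists_mem_Ms_le_w hi (filter_subset _ _) h fun a ha => (mem_superlevel.1 ha).2)
  have hmean := add_mul_le_mul_add_sum (middleWeight_mul_card_Ms hi)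
    (middleWeight_pos E i).le hm' (fun j hj => hm.trans (muMin_le_w hd hF hi hj)) h'
  rw [mem_superlevel, state_succ hi]
  refine ⟨hi, le_trans ?_ hmean⟩
  gcongr
  exact alphaMin_le E i

variable (exec)
variable [Nonempty {i : V // i ∉ F}]

lemma muMin_monotone (hd : ∀ v, 3 * f ≤ #(NinSet E v)) (hF : #F ≤ f) :
    Monotone (muMin exec) := by
  refine monotone_nat_of_le_succ fun t => exec.le_muMin_of_forall_le fun i hi => ?_
  have := mem_superlevel_succ hd hF le_rfl le_rfl hi
    (.inl (mem_superlevel.2 ⟨hi, by simpa using exec.muMin_le_state t hi⟩))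
  simpa using (mem_superlevel.1 this).2

lemma Umax_antitone (hd : ∀ v, 3 * f ≤ #(NinSet E v)) (hF : #F ≤ f) :
    Antitone (Umax exec) := fun s t hst => by
  simpa [muMin_neg] using exec.neg.muMin_monotone hd hF hst

lemma muMin_le_Umax (t : ℕ) : muMin exec t ≤ Umax exec t := by
  obtain ⟨i, hi⟩ := ‹Nonempty {i : V // i ∉ F}›
  exact (exec.muMin_le_state t hi).trans (exec.state_le_Umax t hi)

lemma Umax_sub_muMin_add_card_le (hsuff : SuffCond E f) (hF : #F ≤ f) (t : ℕ) :
    Umax exec (t + Fintype.card V) - muMin exec (t + Fintype.card V) ≤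
      (1 - alphaMin E ^ Fintype.card V / 2) * (Umax exec t - muMin exec t) := by
  have : Nonempty V := .map Subtype.val ‹_›
  have hd := hsuff.1
  have hα := alphaMin_pos E
  have hα1 := alphaMin_le_one E
  set Δ := Umax exec t - muMin exec t with hΔ
  have hΔ0 : 0 ≤ Δ := sub_nonneg.2 (exec.muMin_le_Umax t)
  set ε : ℕ → ℝ := fun τ => alphaMin E ^ τ * (Δ / 2) with hε
  have hε0 τ : 0 ≤ ε τ := by positivity
  have hε_le τ : ε τ ≤ Δ / 2 := mul_le_of_le_one_left (by positivity) (pow_le_one₀ hα.le hα1)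
  have hstep (e : MiddleExec E F) τ : ∀ v ∉ F, v ∈ e.superlevel (t + τ) (muMin e t + ε τ) ∨
      #(NinSet E v) < 3 * #(NinSet E v ∩ e.superlevel (t + τ) (muMin e t + ε τ)) →
      v ∈ e.superlevel (t + (τ + 1)) (muMin e t + ε (τ + 1)) := fun v hv h => by
    have hε_succ : ε (τ + 1) = alphaMin E * ε τ := by simp only [hε]; ring
    rw [hε_succ, ← add_assoc]
    exact mem_superlevel_succ hd hF (e.muMin_monotone hd hF (Nat.le_add_right t τ)) (hε0 τ) hv h
  have hcover τ : exec.superlevel (t + τ) (muMin exec t + ε τ) ∪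
      exec.neg.superlevel (t + τ) (muMin exec.neg t + ε τ) = Fᶜ := by
    ext i
    simp only [mem_union, mem_superlevel, neg_state, muMin_neg, mem_compl]
    have := hε_le τ
    constructor
    · tauto
    · intro hi
      by_contra! h
      linarith [h.1 hi, h.2 hi]
  have hU := exec.Umax_antitone hd hF (Nat.le_add_right t (Fintype.card V))
  have hμ := exec.muMin_monotone hd hF (Nat.le_add_right t (Fintype.card V))
  have hq : (1 - alphaMin E ^ Fintype.card V / 2) * Δ = Δ - ε (Fintype.card V) := by
    simp only [hε]; ring
  rw [hq]
  rcases hsuff.eq_compl_or_eq_compl hF hcover (hstep exec) (hstep exec.neg) with h | h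
  · have := exec.le_muMin_of_forall_le fun i hi => (mem_superlevel.1 (h ▸ mem_compl.2 hi)).2
    linarith
  · have := exec.neg.le_muMin_of_forall_le fun i hi => (mem_superlevel.1 (h ▸ mem_compl.2 hi)).2
    rw [muMin_neg, muMin_neg] at this
    linarith

end MiddleExec

theorem middle_convergence_general
    (E : Finset (V × V)) (f : ℕ)
    (hsuff : SuffCond E f)
    (F : Finset V) (hF : F.card ≤ f)
    (exec : MiddleExec E F) :
    Filter.Tendsto (fun t => Umax exec t - muMin exec t) Filter.atTop (nhds 0) := by
  rcases isEmpty_or_nonempty {i : V // i ∉ F} with _ | hfree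
  · simp [Umax, muMin]
  have : Nonempty V := .map Subtype.val hfree
  have hq : 1 - alphaMin E ^ Fintype.card V / 2 < 1 := by
    linarith [pow_pos (alphaMin_pos E) (Fintype.card V)]
  refine tendsto_zero_of_antitone_of_le_mul ?_ (fun t => sub_nonneg.2 (exec.muMin_le_Umax t)) hq
    (exec.Umax_sub_muMin_add_card_le hsuff hF)
  exact fun s t hst =>
    sub_le_sub (exec.Umax_antitone hsuff.1 hF hst) (exec.muMin_monotone hsuff.1 hF hst)

/-- convergence of the Middle algorithm. -/
theorem middle_convergence
    (E : Finset (V × V)) (f : ℕ)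
    (hn : 2 ≤ Fintype.card V)
    (hloop : ∀ v : V, (v, v) ∉ E)
    (hsuff : SuffCond E f)
    (F : Finset V) (hF : F.card ≤ f)
    (exec : MiddleExec E F) :
    Filter.Tendsto (fun t => Umax exec t - muMin exec t) Filter.atTop (nhds 0) :=
  middle_convergence_general E f hsuff F hF exec
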